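/- arXiv:2509.04364 — 3 statements merged into one kernel-verified Lean document; each statement's English description precedes it below -/
import Mathlib

section
/- Let I be an ideal of S such that in_{x_n}(I) = C(x_n,I) ∩ (N(x_n,I) + (x_n)) is a nondegenerate geometric vertex decomposition, and suppose N(x_n,I) has no embedded primes. Then there exist q ∈ C(x_n,I) and r ∈ S, with no term of q or r divisible by x_n, such that x_n·q + r ∈ I and both q and x_n·q + r are nonzerodivisors modulo N(x_n,I). -/
open MvPolynomial

/-- The trace map on a polynomial ring: on a monomial `m`, it returns
`(m·x_1⋯x_n)^{1/p}/(x_1⋯x_n)` if `m·x_1⋯x_n` is a `p`-th power of a monomial,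
and `0` otherwise, extended `κ`-linearly. -/
noncomputable def Tr (κ : Type*) [CommSemiring κ] {σ : Type*} [Fintype σ] [DecidableEq σ]
    (p : ℕ) (f : MvPolynomial σ κ) : MvPolynomial σ κ :=
  ∑ b ∈ f.support,
    if ∀ i : σ, (b i + 1) % p = 0 then
      MvPolynomial.monomial (Finsupp.equivFunOnFinite.symm fun i => (b i + 1) / p - 1) (f.coeff b)
    else 0

/-- A Frobenius splitting: an additive map `φ` with `φ(a^p·b) = a·φ(b)` and `φ(1) = 1`. -/
def IsFrobSplitting {R : Type*} [CommSemiring R] (p : ℕ) (φ : R → R) : Prop :=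
  (∀ a b : R, φ (a + b) = φ a + φ b) ∧ (∀ a b : R, φ (a ^ p * b) = a * φ b) ∧ φ 1 = 1

/-- `φ` compatibly splits the ideal `I` if `φ(I) ⊆ I`. -/
def CompatiblySplits {R : Type*} [CommSemiring R] (φ : R → R) (I : Ideal R) : Prop :=
  ∀ a ∈ I, φ a ∈ I

/-- `f` has no term divisible by the variable `y`. -/
def NoVar {κ : Type*} [CommSemiring κ] {σ : Type*} (y : σ) (f : MvPolynomial σ κ) : Prop :=
  ∀ b ∈ f.support, (b : σ →₀ ℕ) y = 0

/-- `in_y(f)`: the sum of the terms of `f` of highest degree in the variable `y`. -/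
noncomputable def inY {κ : Type*} [CommSemiring κ] {σ : Type*} [DecidableEq σ]
    (y : σ) (f : MvPolynomial σ κ) : MvPolynomial σ κ :=
  ∑ b ∈ f.support,
    if (b : σ →₀ ℕ) y = f.degreeOf y then MvPolynomial.monomial b (f.coeff b) else 0

/-- `in_y(I)`, the ideal generated by `in_y(f)` for `f ∈ I`. -/
noncomputable def inYIdeal {κ : Type*} [CommSemiring κ] {σ : Type*} [DecidableEq σ]
    (y : σ) (I : Ideal (MvPolynomial σ κ)) : Ideal (MvPolynomial σ κ) :=
  Ideal.span { g | ∃ f ∈ I, g = inY y f }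

/-- The saturation `J : x^∞`. -/
def satPow {R : Type*} [CommRing R] (J : Ideal R) (x : R) : Ideal R where
  carrier := { f | ∃ k : ℕ, x ^ k * f ∈ J }
  zero_mem' := ⟨0, by simp⟩
  add_mem' := by
    rintro a b ⟨k, hk⟩ ⟨l, hl⟩
    refine ⟨k + l, ?_⟩
    have h := J.add_mem (J.mul_mem_left (x ^ l) hk) (J.mul_mem_left (x ^ k) hl)
    have e : x ^ (k + l) * (a + b) = x ^ l * (x ^ k * a) + x ^ k * (x ^ l * b) := by ring
    rwa [e]
  smul_mem' := by
    rintro c a ⟨k, hk⟩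
    refine ⟨k, ?_⟩
    have h := J.mul_mem_left c hk
    have e : x ^ k * (c • a) = c * (x ^ k * a) := by
      simp [smul_eq_mul]; ring
    rwa [e]

/-- `C(y,I) = in_y(I) : y^∞`. -/
noncomputable def Cyd {κ : Type*} [Field κ] {σ : Type*} [DecidableEq σ]
    (y : σ) (I : Ideal (MvPolynomial σ κ)) : Ideal (MvPolynomial σ κ) :=
  satPow (inYIdeal y I) (X y)

/-- `N(y,I)`, the ideal generated by the elements of `I` having no term divisible by `y`. -/
noncomputable def Nyd {κ : Type*} [Field κ] {σ : Type*} (y : σ) (I : Ideal (MvPolynomial σ κ)) :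
    Ideal (MvPolynomial σ κ) :=
  Ideal.span { f | f ∈ I ∧ NoVar y f }

/-- `I` admits a geometric vertex decomposition at `y`. -/
def IsGVD {κ : Type*} [Field κ] {σ : Type*} [DecidableEq σ]
    (y : σ) (I : Ideal (MvPolynomial σ κ)) : Prop :=
  inYIdeal y I = Cyd y I ⊓ (Nyd y I + Ideal.span {X y}) ∧
    ((Cyd y I).radical = (Nyd y I).radical ∨
      ∀ P ∈ (Cyd y I).minimalPrimes, P ∉ (Nyd y I).minimalPrimes)

/-- A nondegenerate geometric vertex decomposition. -/
def IsNondegGVD {κ : Type*} [Field κ] {σ : Type*} [DecidableEq σ]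
    (y : σ) (I : Ideal (MvPolynomial σ κ)) : Prop :=
  IsGVD y I ∧ Cyd y I ≠ ⊤ ∧ (Cyd y I).radical ≠ (Nyd y I).radical

/-- A degenerate geometric vertex decomposition. -/
def IsDegenGVD {κ : Type*} [Field κ] {σ : Type*} [DecidableEq σ]
    (y : σ) (I : Ideal (MvPolynomial σ κ)) : Prop :=
  IsGVD y I ∧ (Cyd y I = ⊤ ∨ (Cyd y I).radical = (Nyd y I).radical)

/-- The ideal `N` has no embedded primes: every associated prime is minimal. -/
def NoEmbeddedPrimes {R : Type*} [CommRing R] (N : Ideal R) : Prop :=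
  associatedPrimes R (R ⧸ N) ⊆ N.minimalPrimes

/-- `q` is a nonzerodivisor modulo `N`. -/
def NZDMod {R : Type*} [CommRing R] (N : Ideal R) (q : R) : Prop :=
  ∀ a : R, q * a ∈ N → a ∈ N


/-!
Write `S = A[y]` with `A = κ[x_1, …, x_{n-1}]` and `y = x_n`; then `N = N(y,I)` is extended from
`I ∩ A`. Let `L ⊆ A` be the ideal of those `q` with `y·q + r ∈ I` for some `r ∈ A`. Every
coefficient `b` of an element of `C = C(y,I)` is a leading coefficient of `I`, so `b ∈ C`, and the
GVD equation gives `y·b ∈ in_y(I)`; reading off the coefficient of `y` shows `b ∈ L`. Hence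
`C` is extended from `L`. Nondegeneracy says that no minimal prime of `N` contains `C`, so by prime
avoidance some `q ∈ L` lies in none of them, and as `N` has no embedded primes, `q` is a
nonzerodivisor modulo `N`. Finally `S / N = (A / (I ∩ A))[y]`, where a polynomial with a
nonzerodivisor coefficient is a nonzerodivisor, so `y·q + r` is a nonzerodivisor modulo `N` too.
-/

open scoped nonZeroDivisors

section CommRing

variable {R : Type*} [CommRing R]

lemma mem_satPow {J : Ideal R} {x u : R} : u ∈ satPow J x ↔ ∃ k : ℕ, x ^ k * u ∈ J :=
  Iff.rfl

lemma map_satPow {R' : Type*} [CommRing R'] (e : R ≃+* R') (J : Ideal R) (x : R) :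
    (satPow J x).map e = satPow (J.map e) (e x) := by
  ext u
  simp only [← Ideal.comap_symm, Ideal.mem_comap, mem_satPow]
  exact exists_congr fun k => by rw [map_mul, map_pow, RingEquiv.symm_apply_apply]

lemma nzdMod_iff_mem_nonZeroDivisors {N : Ideal R} {q : R} :
    NZDMod N q ↔ Ideal.Quotient.mk N q ∈ (R ⧸ N)⁰ := by
  simp only [NZDMod, mem_nonZeroDivisors_iff_right, Ideal.Quotient.mk_surjective.forall,
    ← map_mul, Ideal.Quotient.eq_zero_iff_mem, mul_comm]

lemma nzdMod_map_ringEquiv_iff {R' : Type*} [CommRing R'] (e : R ≃+* R') {N : Ideal R} {q : R} :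
    NZDMod (N.map e) (e q) ↔ NZDMod N q := by
  simp only [NZDMod, e.surjective.forall, ← map_mul, Ideal.apply_mem_of_equiv_iff]

lemma nzdMod_of_forall_notMem_minimalPrimes [IsNoetherianRing R] {N : Ideal R}
    (hN : NoEmbeddedPrimes N) {q : R} (hq : ∀ P ∈ N.minimalPrimes, q ∉ P) : NZDMod N q := by
  have hreg : q ∉ ⋃ P ∈ associatedPrimes R (R ⧸ N), (P : Set R) := by
    simp only [Set.mem_iUnion, not_exists]
    exact fun P hP => hq P (hN hP)
  rw [biUnion_associatedPrimes_eq_compl_regular, Set.notMem_compl_iff] at hreg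
  intro a ha
  rw [← Ideal.Quotient.eq_zero_iff_mem] at ha ⊢
  exact hreg (by simpa [Algebra.smul_def] using ha)

lemma Ideal.mem_minimalPrimes_of_le_of_le {N C P : Ideal R} (hNC : N ≤ C)
    (hP : P ∈ N.minimalPrimes) (hCP : C ≤ P) : P ∈ C.minimalPrimes :=
  ⟨⟨hP.1.1, hCP⟩, fun _ hQ hQP => hP.2 ⟨hQ.1, hNC.trans hQ.2⟩ hQP⟩

lemma Ideal.exists_mem_forall_notMem_of_not_map_le {B : Type*} [CommRing B] (φ : R →+* B)
    {K : Ideal R} {s : Set (Ideal B)} (hs : s.Finite) (hprime : ∀ P ∈ s, P.IsPrime)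
    (hK : ∀ P ∈ s, ¬ K.map φ ≤ P) : ∃ a ∈ K, ∀ P ∈ s, φ a ∉ P := by
  have hcover : ¬ (K : Set R) ⊆ ⋃ P ∈ s, P.comap φ := by
    rw [Ideal.subset_union_prime_finite hs ⊥ ⊥ fun P hP _ _ => (hprime P hP).comap φ]
    rintro ⟨P, hP, hle⟩
    exact hK P hP (Ideal.map_le_iff_le_comap.mpr hle)
  obtain ⟨a, ha, hnot⟩ := Set.not_subset.mp hcover
  exact ⟨a, ha, fun P hP hmem => hnot (Set.mem_biUnion hP hmem)⟩

end CommRing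

namespace Polynomial

variable {A : Type*} [CommRing A]

lemma nzdMod_map_C_of_coeff {K : Ideal A} {p : A[X]} (n : ℕ)
    (h : NZDMod (K.map C) (C (p.coeff n))) : NZDMod (K.map C) p := by
  have hK : NZDMod K (p.coeff n) := fun a ha => by
    simpa using Ideal.mem_map_C_iff.mp
      (h (C a) (by rw [← C_mul]; exact Ideal.mem_map_of_mem C ha)) 0
  have hp : p.map (Ideal.Quotient.mk K) ∈ (A ⧸ K)[X]⁰ :=
    mem_nonzeroDivisors_of_coeff_mem n
      (by rw [coeff_map]; exact nzdMod_iff_mem_nonZeroDivisors.mp hK)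
  intro g hg
  rw [← Ideal.mk_ker (I := K), ← ker_mapRingHom, RingHom.mem_ker] at hg ⊢
  rw [map_mul] at hg
  exact (mem_nonZeroDivisors_iff_right.mp hp) _ (by rwa [mul_comm])

lemma coeff_one_mem_of_mem_map_C_sup_span_X_sq {K : Ideal A} {f : A[X]}
    (hf : f ∈ K.map C ⊔ Ideal.span {X ^ 2}) : f.coeff 1 ∈ K := by
  obtain ⟨v, hv, _, hw, rfl⟩ := Submodule.mem_sup.mp hf
  obtain ⟨w, rfl⟩ := Ideal.mem_span_singleton.mp hw
  rw [coeff_add, coeff_X_pow_mul', if_neg (by norm_num), add_zero]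
  exact Ideal.mem_map_C_iff.mp hv 1

lemma mem_leadingCoeffNth_one {J : Ideal A[X]} {a : A} :
    a ∈ J.leadingCoeffNth 1 ↔ ∃ r, C a * X + C r ∈ J := by
  simp only [Ideal.leadingCoeffNth, Ideal.degreeLE, Submodule.mem_map, Submodule.mem_inf,
    mem_degreeLE, lcoeff_apply]
  constructor
  · rintro ⟨f, ⟨hdeg, hf⟩, rfl⟩
    exact ⟨f.coeff 0, eq_X_add_C_of_degree_le_one hdeg ▸ hf⟩
  · rintro ⟨r, hr⟩
    exact ⟨C a * X + C r, ⟨degree_linear_le, hr⟩, by simp⟩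

noncomputable def initialIdeal (J : Ideal A[X]) : Ideal A[X] :=
  Ideal.span {g | ∃ f ∈ J, g = C f.leadingCoeff * X ^ f.natDegree}

lemma initialIdeal_le_map_C_leadingCoeff (J : Ideal A[X]) :
    initialIdeal J ≤ J.leadingCoeff.map C := by
  refine Ideal.span_le.mpr ?_
  rintro _ ⟨f, hf, rfl⟩
  exact Ideal.mul_mem_right _ _
    (Ideal.mem_map_of_mem _ ((J.mem_leadingCoeff _).mpr ⟨f, hf, rfl⟩))

lemma initialIdeal_le_map_C_leadingCoeffNth_one_sup (J : Ideal A[X]) :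
    initialIdeal J ≤ (J.leadingCoeffNth 1).map C ⊔ Ideal.span {X ^ 2} := by
  refine Ideal.span_le.mpr ?_
  rintro _ ⟨f, hf, rfl⟩
  rcases le_or_gt f.natDegree 1 with hdeg | hdeg
  · refine Submodule.mem_sup_left (Ideal.mul_mem_right _ _ (Ideal.mem_map_of_mem _ ?_))
    exact (J.mem_leadingCoeffNth _ _).mpr ⟨f, hf, natDegree_le_iff_degree_le.mp hdeg, rfl⟩
  · refine Submodule.mem_sup_right (Ideal.mem_span_singleton.mpr ?_)
    exact (pow_dvd_pow X hdeg).mul_left _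

lemma map_C_leadingCoeff_le_satPow (J : Ideal A[X]) :
    J.leadingCoeff.map C ≤ satPow (initialIdeal J) X := by
  refine Ideal.map_le_iff_le_comap.mpr fun a ha => ?_
  obtain ⟨f, hf, rfl⟩ := (J.mem_leadingCoeff a).mp ha
  exact ⟨f.natDegree, Ideal.subset_span ⟨f, hf, mul_comm _ _⟩⟩

lemma map_C_comap_C_le_satPow (J : Ideal A[X]) :
    (J.comap C).map C ≤ satPow (initialIdeal J) X :=
  (Ideal.map_mono fun a ha => (J.mem_leadingCoeff a).mpr ⟨C a, ha, leadingCoeff_C a⟩).trans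
    (map_C_leadingCoeff_le_satPow J)

lemma satPow_initialIdeal_eq_map_C_leadingCoeffNth_one {J : Ideal A[X]}
    (hX : ∀ u ∈ satPow (initialIdeal J) X, X * u ∈ initialIdeal J) :
    satPow (initialIdeal J) X = (J.leadingCoeffNth 1).map C := by
  refine le_antisymm (fun u hu => ?_)
    ((Ideal.map_mono (le_iSup J.leadingCoeffNth 1)).trans (map_C_leadingCoeff_le_satPow J))
  obtain ⟨k, hk⟩ := hu
  refine Ideal.mem_map_C_iff.mpr fun m => ?_
  have hcoeff : u.coeff m ∈ J.leadingCoeff := by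
    simpa using Ideal.mem_map_C_iff.mp (initialIdeal_le_map_C_leadingCoeff J hk) (m + k)
  simpa using coeff_one_mem_of_mem_map_C_sup_span_X_sq
    (initialIdeal_le_map_C_leadingCoeffNth_one_sup J
      (hX _ (map_C_leadingCoeff_le_satPow J (Ideal.mem_map_of_mem C hcoeff))))

end Polynomial

namespace MvPolynomial

section CommRing

variable {R : Type*} [CommRing R] {σ : Type*} [DecidableEq σ]

variable (R) in
noncomputable def polynomialInEquiv (y : σ) :
    MvPolynomial σ R ≃+* Polynomial (MvPolynomial {i // i ≠ y} R) :=
  ((renameEquiv R (Equiv.optionSubtypeNe y).symm).trans (optionEquivLeft R _)).toRingEquiv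

variable {y : σ}

lemma polynomialInEquiv_X_self : polynomialInEquiv R y (X y) = Polynomial.X := by
  simp [polynomialInEquiv, Equiv.optionSubtypeNe_symm_apply, optionEquivLeft_X_none]

lemma polynomialInEquiv_symm_X : (polynomialInEquiv R y).symm Polynomial.X = X y := by
  rw [RingEquiv.symm_apply_eq, polynomialInEquiv_X_self]

lemma natDegree_polynomialInEquiv (f : MvPolynomial σ R) :
    (polynomialInEquiv R y f).natDegree = degreeOf y f :=
  (degreeOf_eq_natDegree y f).symm

lemma coeff_eq_coeff_coeff_polynomialInEquiv (f : MvPolynomial σ R) (b : σ →₀ ℕ) :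
    f.coeff b = ((polynomialInEquiv R y f).coeff (b y)).coeff (b.subtypeDomain (· ≠ y)) := by
  have h := optionEquivLeft_coeff_some_coeff_none R {i // i ≠ y}
    (Finsupp.mapDomain (Equiv.optionSubtypeNe y).symm b)
    (rename (Equiv.optionSubtypeNe y).symm f)
  rw [coeff_rename_mapDomain _ (Equiv.injective _)] at h
  rw [← h]
  have hnone : Finsupp.mapDomain (Equiv.optionSubtypeNe y).symm b none = b y := by
    simp [Finsupp.mapDomain_equiv_apply]
  have hsome : (Finsupp.mapDomain (Equiv.optionSubtypeNe y).symm b).some =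
      b.subtypeDomain (· ≠ y) := by
    ext i
    simp [Finsupp.mapDomain_equiv_apply]
  rw [hnone, hsome]
  rfl

lemma noVar_iff_natDegree_polynomialInEquiv {f : MvPolynomial σ R} :
    NoVar y f ↔ (polynomialInEquiv R y f).natDegree = 0 := by
  rw [natDegree_polynomialInEquiv, degreeOf_eq_sup, ← Nat.bot_eq_zero, Finset.sup_eq_bot_iff]
  rfl

lemma noVar_polynomialInEquiv_symm_C (a : MvPolynomial {i // i ≠ y} R) :
    NoVar y ((polynomialInEquiv R y).symm (Polynomial.C a)) :=
  noVar_iff_natDegree_polynomialInEquiv.mpr (by simp)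

lemma coeff_inY (f : MvPolynomial σ R) (b : σ →₀ ℕ) :
    (inY y f).coeff b = if b y = degreeOf y f then f.coeff b else 0 := by
  simp only [inY, coeff_sum, apply_ite (coeff b), coeff_monomial, coeff_zero]
  rw [Finset.sum_eq_single b (fun c _ hc => by simp [hc])
    (fun hb => by simp [notMem_support_iff.mp hb]), if_pos rfl]

lemma polynomialInEquiv_inY (f : MvPolynomial σ R) :
    polynomialInEquiv R y (inY y f) =
      Polynomial.C (polynomialInEquiv R y f).leadingCoeff *
        Polynomial.X ^ (polynomialInEquiv R y f).natDegree := by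
  rw [← RingEquiv.eq_symm_apply]
  ext b
  rw [coeff_inY, coeff_eq_coeff_coeff_polynomialInEquiv (y := y) ((polynomialInEquiv R y).symm _) b,
    RingEquiv.apply_symm_apply, Polynomial.coeff_C_mul_X_pow, natDegree_polynomialInEquiv]
  split_ifs with h
  · rw [coeff_eq_coeff_coeff_polynomialInEquiv f b, h, Polynomial.leadingCoeff,
      natDegree_polynomialInEquiv]
  · rfl

end CommRing

variable {κ : Type*} [Field κ] {σ : Type*} [DecidableEq σ] {y : σ}

lemma map_inYIdeal (I : Ideal (MvPolynomial σ κ)) :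
    (inYIdeal y I).map (polynomialInEquiv κ y) =
      Polynomial.initialIdeal (I.map (polynomialInEquiv κ y)) := by
  rw [inYIdeal, Ideal.map_span, Polynomial.initialIdeal]
  congr 1
  ext g
  constructor
  · rintro ⟨_, ⟨f, hf, rfl⟩, rfl⟩
    exact ⟨_, Ideal.mem_map_of_mem _ hf, polynomialInEquiv_inY f⟩
  · rintro ⟨h, hh, rfl⟩
    refine ⟨_, ⟨_, Ideal.symm_apply_mem_of_equiv_iff.mpr hh, rfl⟩, ?_⟩
    rw [polynomialInEquiv_inY, RingEquiv.apply_symm_apply]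

lemma map_cyd (I : Ideal (MvPolynomial σ κ)) :
    (Cyd y I).map (polynomialInEquiv κ y) =
      satPow (Polynomial.initialIdeal (I.map (polynomialInEquiv κ y))) Polynomial.X := by
  rw [Cyd, map_satPow, map_inYIdeal, polynomialInEquiv_X_self]

lemma map_nyd (I : Ideal (MvPolynomial σ κ)) :
    (Nyd y I).map (polynomialInEquiv κ y) =
      ((I.map (polynomialInEquiv κ y)).comap Polynomial.C).map Polynomial.C := by
  rw [Nyd, Ideal.map_span, Ideal.map]
  congr 1
  ext g
  constructor
  · rintro ⟨f, ⟨hf, hnv⟩, rfl⟩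
    rw [noVar_iff_natDegree_polynomialInEquiv] at hnv
    refine ⟨_, ?_, (Polynomial.eq_C_of_natDegree_eq_zero hnv).symm⟩
    rw [SetLike.mem_coe, Ideal.mem_comap, ← Polynomial.eq_C_of_natDegree_eq_zero hnv]
    exact Ideal.mem_map_of_mem _ hf
  · rintro ⟨a, ha, rfl⟩
    exact ⟨_, ⟨Ideal.symm_apply_mem_of_equiv_iff.mpr ha, noVar_polynomialInEquiv_symm_C a⟩,
      RingEquiv.apply_symm_apply _ _⟩

lemma nyd_le_cyd (I : Ideal (MvPolynomial σ κ)) : Nyd y I ≤ Cyd y I := by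
  intro f hf
  have h := Polynomial.map_C_comap_C_le_satPow (I.map (polynomialInEquiv κ y))
    (map_nyd I ▸ Ideal.mem_map_of_mem _ hf)
  rwa [← map_cyd, Ideal.apply_mem_of_equiv_iff] at h

lemma IsGVD.map_cyd_eq {I : Ideal (MvPolynomial σ κ)} (h : IsGVD y I) :
    (Cyd y I).map (polynomialInEquiv κ y) =
      ((I.map (polynomialInEquiv κ y)).leadingCoeffNth 1).map Polynomial.C := by
  rw [map_cyd]
  refine Polynomial.satPow_initialIdeal_eq_map_C_leadingCoeffNth_one fun u hu => ?_
  rw [← map_cyd, Ideal.mem_map_of_equiv] at hu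
  obtain ⟨u, hu, rfl⟩ := hu
  rw [← map_inYIdeal, ← polynomialInEquiv_X_self, ← map_mul, Ideal.apply_mem_of_equiv_iff,
    h.1]
  exact ⟨Ideal.mul_mem_left _ _ hu,
    Submodule.mem_sup_right (Ideal.mul_mem_right _ _ (Ideal.mem_span_singleton_self _))⟩

lemma IsNondegGVD.not_cyd_le_of_mem_minimalPrimes {I : Ideal (MvPolynomial σ κ)}
    (h : IsNondegGVD y I) {P : Ideal (MvPolynomial σ κ)} (hP : P ∈ (Nyd y I).minimalPrimes) :
    ¬ Cyd y I ≤ P := by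
  obtain ⟨⟨-, hprimes⟩, -, hrad⟩ := h
  intro hCP
  have hPC := Ideal.mem_minimalPrimes_of_le_of_le (nyd_le_cyd I) hP hCP
  rcases hprimes with hrad' | hdisjoint
  exacts [hrad hrad', hdisjoint P hPC hP]

end MvPolynomial

theorem gvd_part1_general {κ : Type*} [Field κ]
    {n : ℕ} (I : Ideal (MvPolynomial (Fin (n + 1)) κ))
    (hgvd : IsNondegGVD (Fin.last n) I)
    (hemb : NoEmbeddedPrimes (Nyd (Fin.last n) I)) :
    ∃ q ∈ Cyd (Fin.last n) I, ∃ r : MvPolynomial (Fin (n + 1)) κ,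
      NoVar (Fin.last n) q ∧ NoVar (Fin.last n) r ∧
      X (Fin.last n) * q + r ∈ I ∧
      NZDMod (Nyd (Fin.last n) I) q ∧
      NZDMod (Nyd (Fin.last n) I) (X (Fin.last n) * q + r) := by
  set e := polynomialInEquiv κ (Fin.last n)
  have hC := hgvd.1.map_cyd_eq
  have hCyd : ((I.map e).leadingCoeffNth 1).map ((e.symm : _ →+* _).comp Polynomial.C) =
      Cyd (Fin.last n) I := by
    rw [← Ideal.map_map, ← hC]
    exact Ideal.map_of_equiv e
  obtain ⟨q₀, hq₀, havoid⟩ := Ideal.exists_mem_forall_notMem_of_not_map_le _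
    (Nyd (Fin.last n) I).finite_minimalPrimes_of_isNoetherianRing (fun P hP => hP.1.1)
    fun P hP => hCyd ▸ hgvd.not_cyd_le_of_mem_minimalPrimes hP
  obtain ⟨r₀, hr₀⟩ := Polynomial.mem_leadingCoeffNth_one.mp hq₀
  have hlin : e.symm (Polynomial.C q₀ * Polynomial.X + Polynomial.C r₀) =
      X (Fin.last n) * e.symm (Polynomial.C q₀) + e.symm (Polynomial.C r₀) := by
    rw [map_add, map_mul, polynomialInEquiv_symm_X, mul_comm]
  have hq : NZDMod (Nyd (Fin.last n) I) (e.symm (Polynomial.C q₀)) :=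
    nzdMod_of_forall_notMem_minimalPrimes hemb havoid
  refine ⟨e.symm (Polynomial.C q₀), ?_, e.symm (Polynomial.C r₀),
    noVar_polynomialInEquiv_symm_C q₀, noVar_polynomialInEquiv_symm_C r₀,
    hlin ▸ Ideal.symm_apply_mem_of_equiv_iff.mpr hr₀, hq, ?_⟩
  · exact Ideal.symm_apply_mem_of_equiv_iff.mpr (hC ▸ Ideal.mem_map_of_mem _ hq₀)
  · rw [← hlin, ← nzdMod_map_ringEquiv_iff e, RingEquiv.apply_symm_apply, map_nyd]
    refine Polynomial.nzdMod_map_C_of_coeff 1 ?_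
    rw [← map_nyd]
    simpa using (nzdMod_map_ringEquiv_iff e).mpr hq

/-- Part (1) of the key proposition: existence of `q ∈ C(x_n,I)` and `r` with
`x_n·q + r ∈ I`, no term of `q` or `r` divisible by `x_n`, and both `q` and
`x_n·q + r` nonzerodivisors modulo `N(x_n,I)`. -/
theorem gvd_part1 {p : ℕ} [Fact p.Prime] {κ : Type*} [Field κ] [CharP κ p] [PerfectRing κ p]
    {n : ℕ} (I : Ideal (MvPolynomial (Fin (n + 1)) κ))
    (hgvd : IsNondegGVD (Fin.last n) I)
    (hemb : NoEmbeddedPrimes (Nyd (Fin.last n) I)) :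
    ∃ q ∈ Cyd (Fin.last n) I, ∃ r : MvPolynomial (Fin (n + 1)) κ,
      NoVar (Fin.last n) q ∧ NoVar (Fin.last n) r ∧
      X (Fin.last n) * q + r ∈ I ∧
      NZDMod (Nyd (Fin.last n) I) q ∧
      NZDMod (Nyd (Fin.last n) I) (X (Fin.last n) * q + r) :=
  gvd_part1_general I hgvd hemb
end

section
/- Let I be an ideal of S such that in_{x_n}(I) = C(x_n,I) ∩ (N(x_n,I) + (x_n)) is a nondegenerate geometric vertex decomposition, suppose N(x_n,I) has no embedded primes, and fix q ∈ C(x_n,I) and r ∈ S with no term of q or r divisible by x_n such that x_n·q + r ∈ I and both q and x_n·q + r are nonzerodivisors modulo N(x_n,I). Then there is an isomorphism of S-modules ψ : C(x_n,I)/N(x_n,I) → I/N(x_n,I) such that for every f ∈ C(x_n,I), ψ(f mod N(x_n,I)) = g_f mod N(x_n,I), where g_f ∈ S is any element satisfying f·(x_n·q + r) − g_f·q ∈ N(x_n,I). -/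
open MvPolynomial

/-!
Write `y = x_n`, `w = y q + r` and `N = N(y, I)`. For a `y`-free `c ∈ C(y, I)` the equation
`in_y(I) = C ∩ (N + (y))` puts `y c` into `in_y(I)`, hence `y c + s ∈ I` for some `y`-free `s`;
then `w c - q (y c + s) = r c - q s` is a `y`-free element of `I`, so it lies in `N`.
Since `C` is homogeneous for the `y`-degree and saturated with respect to `y`, this gives
`w C ⊆ q I + N`, and induction on the `y`-degree gives `q I ⊆ w C + N`. Thus `w C` and `q I`
coincide in `S/N`, and as `w` and `q` are nonzerodivisors there, `ψ = q⁻¹ ∘ w` is an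
isomorphism `C/N ≅ I/N`.
-/

theorem Ideal.exists_linearEquiv_of_span_singleton_mul_eq {R : Type*} [CommRing R] {a b : R}
    {A B : Ideal R} (ha : IsLeftRegular a) (hb : IsLeftRegular b)
    (h : Ideal.span {a} * A = Ideal.span {b} * B) :
    ∃ φ : A ≃ₗ[R] B, ∀ x : A, b * (φ x : R) = a * x := by
  have hmap (c : R) (J : Ideal R) :
      Submodule.map (LinearMap.mulLeft R c) J = Ideal.span {c} * J := by
    ext x
    simp [Ideal.mem_span_singleton_mul]
  have hAB := (hmap a A).trans (h.trans (hmap b B).symm)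
  let eA := Submodule.equivMapOfInjective (LinearMap.mulLeft R a) ha A
  let eB := Submodule.equivMapOfInjective (LinearMap.mulLeft R b) hb B
  refine ⟨eA.trans ((LinearEquiv.ofEq _ _ hAB).trans eB.symm), fun x => ?_⟩
  exact congrArg Subtype.val (eB.apply_symm_apply (LinearEquiv.ofEq _ _ hAB (eA x)))

theorem NZDMod.isLeftRegular_mk {R : Type*} [CommRing R] {N : Ideal R} {q : R} (h : NZDMod N q) :
    IsLeftRegular (Ideal.Quotient.mk N q) := by
  intro a b hab
  obtain ⟨a, rfl⟩ := Ideal.Quotient.mk_surjective a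
  obtain ⟨b, rfl⟩ := Ideal.Quotient.mk_surjective b
  simp only [← map_mul, Ideal.Quotient.eq, ← mul_sub] at hab ⊢
  exact h _ hab

theorem Ideal.map_mk_eq_of_le_sup {R : Type*} [CommRing R] {J K N : Ideal R}
    (hJ : J ≤ K ⊔ N) (hK : K ≤ J ⊔ N) :
    J.map (Ideal.Quotient.mk N) = K.map (Ideal.Quotient.mk N) := by
  rw [Ideal.map_eq_iff_sup_ker_eq_of_surjective _ Ideal.Quotient.mk_surjective, Ideal.mk_ker]
  exact le_antisymm (sup_le hJ le_sup_right) (sup_le hK le_sup_right)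

namespace MvPolynomial

section WeightedGrading

variable {R : Type*} [CommSemiring R] {σ : Type*} {w : σ → ℕ}

attribute [local instance] weightedGradedAlgebra

theorem weightedHomogeneousComponent_mul_of_le {p : MvPolynomial σ R} {a n : ℕ}
    (hp : IsWeightedHomogeneous w p a) (h : a ≤ n) (f : MvPolynomial σ R) :
    weightedHomogeneousComponent w n (p * f) = p * weightedHomogeneousComponent w (n - a) f := by
  simp only [← weightedDecomposition.decompose'_apply]
  exact DirectSum.coe_decompose_mul_of_left_mem_of_le _ hp h

theorem weightedHomogeneousComponent_mul_of_lt {p : MvPolynomial σ R} {a n : ℕ}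
    (hp : IsWeightedHomogeneous w p a) (h : n < a) (f : MvPolynomial σ R) :
    weightedHomogeneousComponent w n (p * f) = 0 := by
  simp only [← weightedDecomposition.decompose'_apply]
  exact DirectSum.coe_decompose_mul_of_left_mem_of_not_le _ hp (not_le.2 h)

theorem sum_range_weightedHomogeneousComponent {f : MvPolynomial σ R} {d : ℕ}
    (hf : weightedTotalDegree w f ≤ d) :
    ∑ j ∈ Finset.range (d + 1), weightedHomogeneousComponent w j f = f := by
  conv_rhs => rw [← finsum_weightedHomogeneousComponent w f]
  refine (finsum_eq_sum_of_support_subset _ fun j hj => ?_).symm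
  rw [Finset.coe_range, Set.mem_Iio, Nat.lt_succ_iff]
  by_contra hlt
  exact hj (weightedHomogeneousComponent_eq_zero _ _ (lt_of_le_of_lt hf (not_le.1 hlt)))

end WeightedGrading

/- The grading by the degree in the variable `y` is the weighted grading with weight
`Pi.single y 1`; `NoVar y` means weighted homogeneous of degree `0`. -/
section VariableDegree

variable {R : Type*} [CommSemiring R] {σ : Type*} {y : σ}

theorem noVar_iff_degreeOf_eq_zero {f : MvPolynomial σ R} : NoVar y f ↔ degreeOf y f = 0 := by
  rw [← Nat.le_zero, degreeOf_le_iff]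
  simp only [NoVar, Nat.le_zero]

variable [DecidableEq σ]

theorem degreeOf_eq_weightedTotalDegree (f : MvPolynomial σ R) :
    degreeOf y f = weightedTotalDegree (Pi.single y 1) f := by
  simp [degreeOf_eq_sup, weightedTotalDegree, Finsupp.weight_single_one_apply]

theorem noVar_iff_isWeightedHomogeneous {f : MvPolynomial σ R} :
    NoVar y f ↔ IsWeightedHomogeneous (Pi.single y 1) f 0 := by
  simp [NoVar, IsWeightedHomogeneous, Finsupp.weight_single_one_apply]

theorem isWeightedHomogeneous_X_pow (k : ℕ) :
    IsWeightedHomogeneous (Pi.single y 1) (X y ^ k : MvPolynomial σ R) k := by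
  have h := (isWeightedHomogeneous_X R (Pi.single y 1) y).pow k
  rwa [Pi.single_eq_same, smul_eq_mul, mul_one] at h

theorem IsWeightedHomogeneous.degreeOf_le {f : MvPolynomial σ R} {d : ℕ}
    (hf : IsWeightedHomogeneous (Pi.single y 1) f d) : degreeOf y f ≤ d :=
  degreeOf_le_iff.2 fun b hb => by
    rw [← hf (mem_support_iff.1 hb), Finsupp.weight_single_one_apply]

theorem inY_eq_weightedHomogeneousComponent (f : MvPolynomial σ R) :
    inY y f = weightedHomogeneousComponent (Pi.single y 1) (degreeOf y f) f := by
  rw [inY, weightedHomogeneousComponent_apply, Finset.sum_filter]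
  simp only [Finsupp.weight_single_one_apply]

theorem IsWeightedHomogeneous.exists_eq_X_pow_mul {f : MvPolynomial σ R} {d : ℕ}
    (hf : IsWeightedHomogeneous (Pi.single y 1) f d) :
    ∃ g, NoVar y g ∧ f = X y ^ d * g := by
  have hy (b : σ →₀ ℕ) (hb : coeff b f ≠ 0) : b y = d := by
    rw [← hf hb, Finsupp.weight_single_one_apply]
  refine ⟨f.divMonomial (Finsupp.single y d), fun b hb => ?_, ?_⟩
  · rw [mem_support_iff, coeff_divMonomial] at hb
    simpa using hy _ hb
  · have hmod : f.modMonomial (Finsupp.single y d) = 0 := by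
      ext b
      by_cases hb : Finsupp.single y d ≤ b
      · rw [coeff_modMonomial_of_le _ hb, coeff_zero]
      · rw [coeff_modMonomial_of_not_le _ hb, coeff_zero]
        by_contra hc
        exact hb (Finsupp.single_le_iff.2 (hy b hc).ge)
    conv_lhs => rw [← divMonomial_add_modMonomial f (Finsupp.single y d), hmod, add_zero]
    rw [X_pow_eq_monomial]

end VariableDegree

section VariableDegreeRing

variable {R : Type*} [CommRing R] {σ : Type*} [DecidableEq σ] {y : σ}

theorem degreeOf_sub_weightedHomogeneousComponent_le {f : MvPolynomial σ R} {d : ℕ}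
    (hf : degreeOf y f ≤ d + 1) :
    degreeOf y (f - weightedHomogeneousComponent (Pi.single y 1) (d + 1) f) ≤ d := by
  refine degreeOf_le_iff.2 fun b hb => ?_
  rw [mem_support_iff, coeff_sub, coeff_weightedHomogeneousComponent,
    Finsupp.weight_single_one_apply] at hb
  have hle := monomial_le_degreeOf y (f := f) (m := b)
  split_ifs at hb with hby
  · exact absurd (sub_self _) hb
  · rw [sub_zero] at hb
    have := hle (mem_support_iff.2 hb)
    omega

end VariableDegreeRing

end MvPolynomial

section InitialIdeal

variable {R : Type*} [CommSemiring R] {σ : Type*} [DecidableEq σ] {y : σ}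
  {I : Ideal (MvPolynomial σ R)}

attribute [local instance] weightedGradedAlgebra

theorem isHomogeneous_inYIdeal :
    (inYIdeal y I).IsHomogeneous (weightedHomogeneousSubmodule R (Pi.single y 1)) := by
  refine Ideal.homogeneous_span _ _ fun x ⟨f, _, hx⟩ => ⟨degreeOf y f, ?_⟩
  rw [hx, inY_eq_weightedHomogeneousComponent]
  exact weightedHomogeneousComponent_mem _ _ _

theorem weightedHomogeneousComponent_mem_inYIdeal {h : MvPolynomial σ R} (hh : h ∈ I) {d : ℕ}
    (hd : degreeOf y h ≤ d) :
    weightedHomogeneousComponent (Pi.single y 1) d h ∈ inYIdeal y I := by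
  rcases hd.lt_or_eq with hlt | rfl
  · rw [weightedHomogeneousComponent_eq_zero _ _ (degreeOf_eq_weightedTotalDegree h ▸ hlt)]
    exact zero_mem _
  · rw [← inY_eq_weightedHomogeneousComponent]
    exact Ideal.subset_span ⟨h, hh, rfl⟩

theorem exists_mem_degreeOf_le_weightedHomogeneousComponent_eq {h : MvPolynomial σ R}
    (hh : h ∈ inYIdeal y I) (d : ℕ) :
    ∃ g ∈ I, degreeOf y g ≤ d ∧ weightedHomogeneousComponent (Pi.single y 1) d g =
      weightedHomogeneousComponent (Pi.single y 1) d h := by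
  let P (h : MvPolynomial σ R) : Prop := ∀ d, ∃ g ∈ I, degreeOf y g ≤ d ∧
    weightedHomogeneousComponent (Pi.single y 1) d g =
      weightedHomogeneousComponent (Pi.single y 1) d h
  have zero : P 0 := fun d => ⟨0, I.zero_mem, by simp [degreeOf_zero]⟩
  have add (a b) (ha : P a) (hb : P b) : P (a + b) := fun d => by
    obtain ⟨g, hg, hgd, hgc⟩ := ha d
    obtain ⟨g', hg', hgd', hgc'⟩ := hb d
    exact ⟨g + g', I.add_mem hg hg', (degreeOf_add_le _ _ _).trans (max_le hgd hgd'),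
      by rw [map_add, map_add, hgc, hgc']⟩
  have mul (p x) {a : ℕ} (hp : IsWeightedHomogeneous (Pi.single y 1) p a) (hx : P x) :
      P (p * x) := fun d => by
    rcases lt_or_ge d a with hlt | hle
    · exact ⟨0, I.zero_mem, by simp [degreeOf_zero],
        by rw [map_zero, weightedHomogeneousComponent_mul_of_lt hp hlt]⟩
    obtain ⟨g, hg, hgd, hgc⟩ := hx (d - a)
    refine ⟨p * g, I.mul_mem_left p hg, ?_, by
      rw [weightedHomogeneousComponent_mul_of_le hp hle,
        weightedHomogeneousComponent_mul_of_le hp hle, hgc]⟩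
    calc degreeOf y (p * g) ≤ degreeOf y p + degreeOf y g := degreeOf_mul_le _ _ _
      _ ≤ a + (d - a) := add_le_add hp.degreeOf_le hgd
      _ = d := by omega
  revert d
  refine Submodule.span_induction ?_ zero (fun a b _ _ => add a b) (fun s x _ hx => ?_) hh
  · rintro _ ⟨f, hf, rfl⟩ d
    rw [inY_eq_weightedHomogeneousComponent]
    have hc := weightedHomogeneousComponent_isWeightedHomogeneous (w := Pi.single y 1)
      (degreeOf y f) f
    by_cases hd : d = degreeOf y f
    · subst hd
      exact ⟨f, hf, le_rfl, hc.weightedHomogeneousComponent_same.symm⟩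
    · exact ⟨0, I.zero_mem, by simp [degreeOf_zero],
        by rw [map_zero, hc.weightedHomogeneousComponent_ne _ hd]⟩
  · rw [smul_eq_mul,
      ← sum_range_weightedHomogeneousComponent (degreeOf_eq_weightedTotalDegree s).ge,
      Finset.sum_mul]
    exact Finset.sum_induction _ P add zero fun j _ =>
      mul _ _ (weightedHomogeneousComponent_isWeightedHomogeneous j s) hx

end InitialIdeal

section CydNyd

variable {κ : Type*} [Field κ] {σ : Type*} {y : σ} {I : Ideal (MvPolynomial σ κ)}

theorem mem_Nyd {f : MvPolynomial σ κ} (hf : f ∈ I) (hnv : NoVar y f) : f ∈ Nyd y I :=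
  Ideal.subset_span ⟨hf, hnv⟩

variable [DecidableEq σ]

theorem mem_Cyd_iff {f : MvPolynomial σ κ} :
    f ∈ Cyd y I ↔ ∃ k : ℕ, X y ^ k * f ∈ inYIdeal y I := Iff.rfl

theorem mem_Cyd_of_X_pow_mul_mem {f : MvPolynomial σ κ} {j : ℕ}
    (hf : X y ^ j * f ∈ Cyd y I) : f ∈ Cyd y I := by
  obtain ⟨k, hk⟩ := mem_Cyd_iff.1 hf
  exact mem_Cyd_iff.2 ⟨k + j, by rwa [pow_add, mul_assoc]⟩

attribute [local instance] weightedGradedAlgebra in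
theorem weightedHomogeneousComponent_mem_Cyd {f : MvPolynomial σ κ} (hf : f ∈ Cyd y I)
    (j : ℕ) : weightedHomogeneousComponent (Pi.single y 1) j f ∈ Cyd y I := by
  obtain ⟨k, hk⟩ := mem_Cyd_iff.1 hf
  refine mem_Cyd_iff.2 ⟨k, ?_⟩
  rw [← Nat.add_sub_cancel_left (n := k) (m := j),
    ← weightedHomogeneousComponent_mul_of_le (isWeightedHomogeneous_X_pow k) le_self_add]
  exact weightedHomogeneousComponent_mem_of_mem _ _ isHomogeneous_inYIdeal hk _

theorem exists_noVar_X_mul_add_mem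
    (hgvd : Cyd y I ⊓ (Nyd y I + Ideal.span {X y}) ≤ inYIdeal y I)
    {c : MvPolynomial σ κ} (hc : c ∈ Cyd y I) (hcv : NoVar y c) :
    ∃ s, NoVar y s ∧ X y * c + s ∈ I := by
  have hXc : X y * c ∈ inYIdeal y I := hgvd ⟨(Cyd y I).mul_mem_left _ hc,
    Submodule.mem_sup_right (Ideal.mul_mem_right c _ (Ideal.mem_span_singleton_self _))⟩
  have hXc_homog : IsWeightedHomogeneous (Pi.single y 1) (X y * c) 1 := by
    simpa using (isWeightedHomogeneous_X_pow 1).mul (noVar_iff_isWeightedHomogeneous.1 hcv)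
  obtain ⟨g, hg, hgd, hgc⟩ := exists_mem_degreeOf_le_weightedHomogeneousComponent_eq hXc 1
  refine ⟨weightedHomogeneousComponent (Pi.single y 1) 0 g, noVar_iff_isWeightedHomogeneous.2
    (weightedHomogeneousComponent_isWeightedHomogeneous 0 g), ?_⟩
  have hg_split := sum_range_weightedHomogeneousComponent
    ((degreeOf_eq_weightedTotalDegree g).ge.trans hgd)
  rw [Finset.sum_range_succ, Finset.sum_range_one] at hg_split
  rwa [← hXc_homog.weightedHomogeneousComponent_same, ← hgc, add_comm, hg_split]

end CydNyd

section VertexDecomposition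

variable {κ : Type*} [Field κ] {σ : Type*} [DecidableEq σ] {y : σ}
  {I : Ideal (MvPolynomial σ κ)} {q r : MvPolynomial σ κ}

theorem mul_sub_mul_X_mul_add_mem_Nyd (hq : NoVar y q) (hr : NoVar y r)
    (hqrI : X y * q + r ∈ I) {c s : MvPolynomial σ κ} (hc : NoVar y c) (hs : NoVar y s)
    (hcs : X y * c + s ∈ I) :
    (X y * q + r) * c - q * (X y * c + s) ∈ Nyd y I := by
  have hI := I.sub_mem (I.mul_mem_right c hqrI) (I.mul_mem_left q hcs)
  have h : (X y * q + r) * c - q * (X y * c + s) = r * c - q * s := by ring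
  rw [h] at hI ⊢
  simp only [noVar_iff_isWeightedHomogeneous] at hq hr hc hs
  exact mem_Nyd hI (noVar_iff_isWeightedHomogeneous.2 ((hr.mul hc).sub (hq.mul hs)))

theorem span_mul_Cyd_le_span_mul_sup_Nyd
    (hgvd : Cyd y I ⊓ (Nyd y I + Ideal.span {X y}) ≤ inYIdeal y I)
    (hq : NoVar y q) (hr : NoVar y r) (hqrI : X y * q + r ∈ I) :
    Ideal.span {X y * q + r} * Cyd y I ≤ Ideal.span {q} * I ⊔ Nyd y I := by
  rw [Ideal.span_singleton_mul_le_iff]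
  intro c hc
  rw [← sum_range_weightedHomogeneousComponent (degreeOf_eq_weightedTotalDegree c).ge,
    Finset.mul_sum]
  refine Ideal.sum_mem _ fun j _ => ?_
  obtain ⟨cj, hcj, hcj_eq⟩ :=
    (weightedHomogeneousComponent_isWeightedHomogeneous j c).exists_eq_X_pow_mul
  have hcjC : cj ∈ Cyd y I :=
    mem_Cyd_of_X_pow_mul_mem (hcj_eq ▸ weightedHomogeneousComponent_mem_Cyd hc j)
  obtain ⟨s, hs, hsI⟩ := exists_noVar_X_mul_add_mem hgvd hcjC hcj
  rw [hcj_eq, mul_left_comm, ← sub_add_cancel ((X y * q + r) * cj) (q * (X y * cj + s))]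
  refine Ideal.mul_mem_left _ _ (add_mem ?_ ?_)
  · exact Submodule.mem_sup_right (mul_sub_mul_X_mul_add_mem_Nyd hq hr hqrI hcj hs hsI)
  · exact Submodule.mem_sup_left (Ideal.mul_mem_mul (Ideal.mem_span_singleton_self q) hsI)

theorem span_mul_le_span_mul_Cyd_sup_Nyd
    (hgvd : Cyd y I ⊓ (Nyd y I + Ideal.span {X y}) ≤ inYIdeal y I)
    (hq : NoVar y q) (hr : NoVar y r) (hqrI : X y * q + r ∈ I) :
    Ideal.span {q} * I ≤ Ideal.span {X y * q + r} * Cyd y I ⊔ Nyd y I := by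
  rw [Ideal.span_singleton_mul_le_iff]
  suffices ∀ d, ∀ h ∈ I, degreeOf y h ≤ d →
      q * h ∈ Ideal.span {X y * q + r} * Cyd y I ⊔ Nyd y I from fun h hh => this _ h hh le_rfl
  intro d
  induction d with
  | zero =>
    intro h hh hd
    exact Submodule.mem_sup_right (Ideal.mul_mem_left _ _
      (mem_Nyd hh (noVar_iff_degreeOf_eq_zero.2 (Nat.le_zero.1 hd))))
  | succ d ih =>
    intro h hh hd
    obtain ⟨c, hc, hc_eq⟩ :=
      (weightedHomogeneousComponent_isWeightedHomogeneous (d + 1) h).exists_eq_X_pow_mul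
    have hcC : c ∈ Cyd y I :=
      mem_Cyd_iff.2 ⟨d + 1, hc_eq ▸ weightedHomogeneousComponent_mem_inYIdeal hh hd⟩
    obtain ⟨s, hs, hsI⟩ := exists_noVar_X_mul_add_mem hgvd hcC hc
    have hlow : degreeOf y (h - X y ^ d * (X y * c + s)) ≤ d := by
      have : h - X y ^ d * (X y * c + s) =
          (h - weightedHomogeneousComponent (Pi.single y 1) (d + 1) h) - X y ^ d * s := by
        rw [hc_eq]; ring
      rw [this]
      refine (degreeOf_sub_le _ _ _).trans
        (max_le (degreeOf_sub_weightedHomogeneousComponent_le hd) ?_)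
      exact ((isWeightedHomogeneous_X_pow d).mul
        (noVar_iff_isWeightedHomogeneous.1 hs)).degreeOf_le
    have hqg : q * (X y * c + s) ∈ Ideal.span {X y * q + r} * Cyd y I ⊔ Nyd y I := by
      rw [← sub_sub_cancel ((X y * q + r) * c) (q * (X y * c + s))]
      refine sub_mem ?_ ?_
      · exact Submodule.mem_sup_left (Ideal.mul_mem_mul (Ideal.mem_span_singleton_self _) hcC)
      · exact Submodule.mem_sup_right (mul_sub_mul_X_mul_add_mem_Nyd hq hr hqrI hc hs hsI)
    rw [← sub_add_cancel h (X y ^ d * (X y * c + s)), mul_add, mul_left_comm]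
    exact add_mem (ih _ (I.sub_mem hh (I.mul_mem_left _ hsI)) hlow) (Ideal.mul_mem_left _ _ hqg)

end VertexDecomposition

theorem gvd_part3_general {κ : Type*} [Field κ]
    {n : ℕ} (I : Ideal (MvPolynomial (Fin (n + 1)) κ))
    (hgvd : IsNondegGVD (Fin.last n) I)
    (q r : MvPolynomial (Fin (n + 1)) κ)
    (hq : NoVar (Fin.last n) q) (hr : NoVar (Fin.last n) r)
    (hqrI : X (Fin.last n) * q + r ∈ I)
    (hqnzd : NZDMod (Nyd (Fin.last n) I) q)
    (hqrnzd : NZDMod (Nyd (Fin.last n) I) (X (Fin.last n) * q + r)) :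
    ∃ ψ : (Submodule.restrictScalars (MvPolynomial (Fin (n + 1)) κ)
            ((Cyd (Fin.last n) I).map (Ideal.Quotient.mk (Nyd (Fin.last n) I)))) ≃ₗ[MvPolynomial (Fin (n + 1)) κ]
          (Submodule.restrictScalars (MvPolynomial (Fin (n + 1)) κ)
            (I.map (Ideal.Quotient.mk (Nyd (Fin.last n) I)))),
      ∀ (f : MvPolynomial (Fin (n + 1)) κ) (hf : f ∈ Cyd (Fin.last n) I)
        (gf : MvPolynomial (Fin (n + 1)) κ),
        f * (X (Fin.last n) * q + r) - gf * q ∈ Nyd (Fin.last n) I →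
          (ψ ⟨Ideal.Quotient.mk (Nyd (Fin.last n) I) f,
              Ideal.mem_map_of_mem _ hf⟩ :
            MvPolynomial (Fin (n + 1)) κ ⧸ Nyd (Fin.last n) I) =
            Ideal.Quotient.mk (Nyd (Fin.last n) I) gf := by
  set π := Ideal.Quotient.mk (Nyd (Fin.last n) I)
  have hgvd_le := hgvd.1.1.ge
  have hmap : Ideal.span {π (X (Fin.last n) * q + r)} * (Cyd (Fin.last n) I).map π =
      Ideal.span {π q} * I.map π := by
    simpa only [Ideal.map_mul, Ideal.map_span, Set.image_singleton] using
      Ideal.map_mk_eq_of_le_sup (span_mul_Cyd_le_span_mul_sup_Nyd hgvd_le hq hr hqrI)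
        (span_mul_le_span_mul_Cyd_sup_Nyd hgvd_le hq hr hqrI)
  obtain ⟨φ, hφ⟩ := Ideal.exists_linearEquiv_of_span_singleton_mul_eq
    hqrnzd.isLeftRegular_mk hqnzd.isLeftRegular_mk hmap
  refine ⟨φ.restrictScalars (MvPolynomial (Fin (n + 1)) κ),
    fun f hf gf hfg => hqnzd.isLeftRegular_mk ?_⟩
  refine (hφ ⟨π f, Ideal.mem_map_of_mem π hf⟩).trans ?_
  beta_reduce
  rw [← map_mul, ← map_mul, Ideal.Quotient.eq]
  convert hfg using 1
  ring

set_option synthInstance.maxHeartbeats 1000000 in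
/-- Part (3): the assignment `f ↦ g_f` induces an `S`-module isomorphism
`ψ : C(x_n,I)/N(x_n,I) → I/N(x_n,I)`, where both are viewed as `S`-submodules of
`S/N(x_n,I)`. -/
theorem gvd_part3 {p : ℕ} [Fact p.Prime] {κ : Type*} [Field κ] [CharP κ p] [PerfectRing κ p]
    {n : ℕ} (I : Ideal (MvPolynomial (Fin (n + 1)) κ))
    (hgvd : IsNondegGVD (Fin.last n) I)
    (hemb : NoEmbeddedPrimes (Nyd (Fin.last n) I))
    (q r : MvPolynomial (Fin (n + 1)) κ)
    (hqC : q ∈ Cyd (Fin.last n) I)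
    (hq : NoVar (Fin.last n) q) (hr : NoVar (Fin.last n) r)
    (hqrI : X (Fin.last n) * q + r ∈ I)
    (hqnzd : NZDMod (Nyd (Fin.last n) I) q)
    (hqrnzd : NZDMod (Nyd (Fin.last n) I) (X (Fin.last n) * q + r)) :
    ∃ ψ : (Submodule.restrictScalars (MvPolynomial (Fin (n + 1)) κ)
            ((Cyd (Fin.last n) I).map (Ideal.Quotient.mk (Nyd (Fin.last n) I)))) ≃ₗ[MvPolynomial (Fin (n + 1)) κ]
          (Submodule.restrictScalars (MvPolynomial (Fin (n + 1)) κ)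
            (I.map (Ideal.Quotient.mk (Nyd (Fin.last n) I)))),
      ∀ (f : MvPolynomial (Fin (n + 1)) κ) (hf : f ∈ Cyd (Fin.last n) I)
        (gf : MvPolynomial (Fin (n + 1)) κ),
        f * (X (Fin.last n) * q + r) - gf * q ∈ Nyd (Fin.last n) I →
          (ψ ⟨Ideal.Quotient.mk (Nyd (Fin.last n) I) f,
              Ideal.mem_map_of_mem _ hf⟩ :
            MvPolynomial (Fin (n + 1)) κ ⧸ Nyd (Fin.last n) I) =
            Ideal.Quotient.mk (Nyd (Fin.last n) I) gf :=
  gvd_part3_general I hgvd q r hq hr hqrI hqnzd hqrnzd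
end

section
/- Let g ∈ S have no term divisible by x_n and let C be an ideal of S generated by polynomials in which the variable x_n does not appear. If Tr((x_n·g)^{p−1}•) compatibly splits C, then Tr(g^{p−1}·c) ∈ C for every c ∈ C. -/
open MvPolynomial

/-! Write an element of `C = (G)` as a sum of terms `x_n^j · m · w` with `w ∈ G` and `m` a
monomial free of `x_n`; as `Tr` is additive it suffices to treat one such term. Every monomial of
`g^{p-1} · x_n^j · m · w` has `x_n`-exponent exactly `j`, so `Tr` kills the term unless
`j = p - 1 + p k`, and then `g^{p-1} x_n^j m w = (x_n g)^{p-1} · x_n^{p k} m w` lies in the image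
of `C` under the splitting `Tr((x_n g)^{p-1} •)`. -/

theorem Ideal.span_le_of_forall_mul_mem {R : Type*} [CommSemiring R] {G : Set R}
    {M : AddSubmonoid R} (h : ∀ w ∈ G, ∀ r : R, r * w ∈ M) :
    (Ideal.span G).toAddSubmonoid ≤ M := by
  intro c hc
  have hmul : ∀ r, r * c ∈ M := by
    induction hc using Submodule.span_induction with
    | mem w hw => exact h w hw
    | zero => simp [M.zero_mem]
    | add a b _ _ ha hb => intro r; rw [mul_add]; exact M.add_mem (ha r) (hb r)
    | smul s a _ ha => intro r; rw [smul_eq_mul, ← mul_assoc]; exact ha (r * s)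
  simpa using hmul 1

theorem MvPolynomial.mul_mem_of_forall_monomial_mul_mem {R σ : Type*} [CommSemiring R]
    {M : AddSubmonoid (MvPolynomial σ R)} {w : MvPolynomial σ R}
    (h : ∀ b a, monomial b a * w ∈ M) (f : MvPolynomial σ R) : f * w ∈ M :=
  induction_on' f h fun f f' hf hf' => by rw [add_mul]; exact M.add_mem hf hf'

section NoVar

variable {κ : Type*} [CommSemiring κ] {σ : Type*} {y : σ}

theorem noVar_iff_mem_supported {f : MvPolynomial σ κ} :
    NoVar y f ↔ f ∈ supported κ ({y}ᶜ : Set σ) := by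
  classical
  simp [NoVar, mem_supported, Set.subset_compl_singleton_iff, mem_vars_iff_mem_support]

theorem NoVar.mul {u v : MvPolynomial σ κ} (hu : NoVar y u) (hv : NoVar y v) :
    NoVar y (u * v) :=
  noVar_iff_mem_supported.mpr
    (mul_mem (noVar_iff_mem_supported.mp hu) (noVar_iff_mem_supported.mp hv))

theorem NoVar.pow {u : MvPolynomial σ κ} (hu : NoVar y u) (k : ℕ) : NoVar y (u ^ k) :=
  noVar_iff_mem_supported.mpr (pow_mem (noVar_iff_mem_supported.mp hu) k)

theorem noVar_monomial_erase (b : σ →₀ ℕ) (a : κ) : NoVar y (monomial (b.erase y) a) :=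
  fun b' hb' => by
    rw [Finset.mem_singleton.mp (support_monomial_subset hb')]
    exact Finsupp.erase_same

theorem NoVar.apply_eq_of_mem_support_X_pow_mul {q : MvPolynomial σ κ} (hq : NoVar y q) {j : ℕ}
    {b : σ →₀ ℕ} (hb : b ∈ (X y ^ j * q).support) : b y = j := by
  rw [mem_support_iff, X_pow_eq_monomial, coeff_monomial_mul'] at hb
  split_ifs at hb with hle
  · have hsub := hq _ (mem_support_iff.mpr (right_ne_zero_of_mul hb))
    have hj := Finsupp.single_le_iff.mp hle
    rw [Finsupp.tsub_apply, Finsupp.single_eq_same] at hsub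
    omega
  · exact absurd rfl hb

end NoVar

section Trace

variable {κ : Type*} [CommSemiring κ] {σ : Type*} [Fintype σ] [DecidableEq σ] {p : ℕ}

theorem Tr_eq_sum (f : MvPolynomial σ κ) :
    Tr κ p f = (AddMonoidAlgebra.coeff f).sum fun b c => if ∀ i : σ, (b i + 1) % p = 0 then
      monomial (Finsupp.equivFunOnFinite.symm fun i => (b i + 1) / p - 1) c else 0 := by
  rw [Tr, sum_def]

theorem Tr_add (f f' : MvPolynomial σ κ) : Tr κ p (f + f') = Tr κ p f + Tr κ p f' := by
  simp only [Tr_eq_sum, AddMonoidAlgebra.coeff_add]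
  refine Finsupp.sum_add_index' (fun b => by simp) fun b c c' => ?_
  split_ifs <;> simp

variable (κ σ p) in
noncomputable def trAddMonoidHom : MvPolynomial σ κ →+ MvPolynomial σ κ where
  toFun := Tr κ p
  map_zero' := by simp [Tr]
  map_add' := Tr_add

theorem Tr_X_pow_mul_eq_zero {y : σ} {j : ℕ} (hj : (j + 1) % p ≠ 0) {q : MvPolynomial σ κ}
    (hq : NoVar y q) : Tr κ p (X y ^ j * q) = 0 :=
  Finset.sum_eq_zero fun _ hb =>
    if_neg fun h => hj (hq.apply_eq_of_mem_support_X_pow_mul hb ▸ h y)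

theorem Tr_pow_mul_monomial_mul_mem {y : σ} {g : MvPolynomial σ κ} (hg : NoVar y g)
    {I : Ideal (MvPolynomial σ κ)}
    (hI : CompatiblySplits (fun a => Tr κ p ((X y * g) ^ (p - 1) * a)) I)
    {w : MvPolynomial σ κ} (hwI : w ∈ I) (hw : NoVar y w) (b : σ →₀ ℕ) (a : κ) :
    Tr κ p (g ^ (p - 1) * (monomial b a * w)) ∈ I := by
  have hsplit : monomial b a = X y ^ b y * monomial (b.erase y) a := by
    rw [← monomial_single_add, Finsupp.single_add_erase]
  by_cases hj : (b y + 1) % p = 0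
  · obtain ⟨k, hk⟩ : ∃ k, b y = p - 1 + p * k := by
      obtain ⟨_ | k, hd⟩ := Nat.dvd_of_mod_eq_zero hj
      · omega
      · rcases p with _ | p
        · simp at hd
        · exact ⟨k, by rw [mul_add_one] at hd; omega⟩
    have hfactor : g ^ (p - 1) * (monomial b a * w)
        = (X y * g) ^ (p - 1) * (X y ^ (p * k) * monomial (b.erase y) a * w) := by
      rw [hsplit, hk, pow_add, mul_pow]; ring
    rw [hfactor]
    exact hI _ (I.mul_mem_left _ hwI)
  · have hnv : NoVar y (g ^ (p - 1) * monomial (b.erase y) a * w) :=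
      ((hg.pow _).mul (noVar_monomial_erase b a)).mul hw
    have hfactor : g ^ (p - 1) * (monomial b a * w)
        = X y ^ b y * (g ^ (p - 1) * monomial (b.erase y) a * w) := by
      rw [hsplit]; ring
    rw [hfactor, Tr_X_pow_mul_eq_zero hj hnv]
    exact I.zero_mem

theorem Tr_pow_mul_mem_span_of_compatiblySplits {y : σ} {g : MvPolynomial σ κ} (hg : NoVar y g)
    {G : Set (MvPolynomial σ κ)} (hG : ∀ w ∈ G, NoVar y w)
    (hC : CompatiblySplits (fun a => Tr κ p ((X y * g) ^ (p - 1) * a)) (Ideal.span G)) :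
    ∀ c ∈ Ideal.span G, Tr κ p (g ^ (p - 1) * c) ∈ Ideal.span G := fun _ hc =>
  Ideal.span_le_of_forall_mul_mem
    (M := (Ideal.span G).toAddSubmonoid.comap
      ((trAddMonoidHom κ σ p).comp (AddMonoidHom.mulLeft (g ^ (p - 1)))))
    (fun w hw => mul_mem_of_forall_monomial_mul_mem
      (Tr_pow_mul_monomial_mul_mem hg hC (Ideal.subset_span hw) (hG w hw))) hc

end Trace

theorem trace_link_claim_general {p : ℕ} {κ : Type*} [Field κ]
    {n : ℕ} (g : MvPolynomial (Fin (n + 1)) κ)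
    (hg : NoVar (Fin.last n) g)
    (C : Ideal (MvPolynomial (Fin (n + 1)) κ))
    (hCgen : ∃ G : Set (MvPolynomial (Fin (n + 1)) κ),
      (∀ h ∈ G, NoVar (Fin.last n) h) ∧ C = Ideal.span G)
    (hC : CompatiblySplits (fun a => Tr κ p ((X (Fin.last n) * g) ^ (p - 1) * a)) C) :
    ∀ c ∈ C, Tr κ p (g ^ (p - 1) * c) ∈ C := by
  obtain ⟨G, hG, rfl⟩ := hCgen
  exact Tr_pow_mul_mem_span_of_compatiblySplits hg hG hC

/-- If `g` has no term divisible by `x_n`, `C` is generated by polynomials not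
involving `x_n`, and `Tr((x_n·g)^{p−1}•)` compatibly splits `C`, then
`Tr(g^{p−1}·c) ∈ C` for every `c ∈ C`. -/
theorem trace_link_claim {p : ℕ} [Fact p.Prime] {κ : Type*} [Field κ] [CharP κ p]
    [PerfectRing κ p]
    {n : ℕ} (g : MvPolynomial (Fin (n + 1)) κ)
    (hg : NoVar (Fin.last n) g)
    (C : Ideal (MvPolynomial (Fin (n + 1)) κ))
    (hCgen : ∃ G : Set (MvPolynomial (Fin (n + 1)) κ),
      (∀ h ∈ G, NoVar (Fin.last n) h) ∧ C = Ideal.span G)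
    (hC : CompatiblySplits (fun a => Tr κ p ((X (Fin.last n) * g) ^ (p - 1) * a)) C) :
    ∀ c ∈ C, Tr κ p (g ^ (p - 1) * c) ∈ C :=
  trace_link_claim_general g hg C hCgen hC
end
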